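/- Let (Ω, ℱ, μ) be a probability space and (𝒢_t)_{t∈ℕ} a filtration with 𝒢_t ⊆ ℱ. Let G be a real symmetric n×n matrix and τ > 0 with x · (G x) ≥ τ ‖x‖² for all x ∈ ℝ^n; let b ∈ ℝ^n and z⋆ ∈ ℝ^n with G z⋆ = b; let σ ≥ 0 and 0 < η ≤ 1/(2τ). Let Z_t, g_t : Ω → ℝ^n for t ∈ ℕ satisfy: Z_t is strongly 𝒢_t-measurable and Z_t ∈ L²(μ); g_t ∈ L²(μ) with ∫ ‖g_t‖² dμ ≤ σ²; E[g_t | 𝒢_t](ω) = G Z_t(ω) − b for μ-a.e. ω; and Z_{t+1}(ω) = Z_t(ω) − η g_t(ω) for all ω. Then for every t ∈ ℕ, ∫ ‖Z_t − z⋆‖² dμ ≤ (1 − 2ητ)^t ∫ ‖Z_0 − z⋆‖² dμ + (1 − (1 − 2ητ)^t) · (η σ²)/(2τ). -/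

import Mathlib

open Matrix MeasureTheory
open scoped RealInnerProductSpace

/-!
Write `e_t = Z_t − z⋆`, so that `e_{t+1} = e_t − η g_t`. Expanding the square,
`E‖e_{t+1}‖² = E‖e_t‖² − 2η E⟪e_t, g_t⟫ + η² E‖g_t‖²`. Since `e_t` is `𝒢_t`-measurable, the
cross term only sees `E[g_t | 𝒢_t] = G e_t`, and strong convexity bounds it below by
`τ E‖e_t‖²`. Hence `E‖e_{t+1}‖² ≤ (1 − 2ητ) E‖e_t‖² + η²σ²`, a linear recursion with
contraction factor `1 − 2ητ ∈ [0, 1)` and fixed point `ησ²/(2τ)`.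
-/

section InnerProduct

variable {Ω E : Type*} {m mΩ : MeasurableSpace Ω} {μ : Measure Ω}
  [NormedAddCommGroup E] [InnerProductSpace ℝ E]

theorem MeasureTheory.MemLp.integrable_inner {f g : Ω → E} (hf : MemLp f 2 μ)
    (hg : MemLp g 2 μ) : Integrable (fun ω ↦ ⟪f ω, g ω⟫) μ :=
  memLp_one_iff_integrable.1 ((innerSL ℝ).memLp_of_bilin 1 hf hg)

theorem integral_inner_condExp_of_stronglyMeasurable_left [CompleteSpace E] (hm : m ≤ mΩ)
    [SigmaFinite (μ.trim hm)] {f g : Ω → E} (hf : StronglyMeasurable[m] f)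
    (hfg : Integrable (fun ω ↦ ⟪f ω, g ω⟫) μ) (hg : Integrable g μ) :
    ∫ ω, ⟪f ω, (μ[g|m]) ω⟫ ∂μ = ∫ ω, ⟪f ω, g ω⟫ ∂μ := by
  refine (integral_congr_ae ?_).trans (integral_condExp hm)
  exact (condExp_bilin_of_stronglyMeasurable_left (innerSL ℝ) hf hfg hg).symm

theorem integral_norm_sub_smul_sq {e g : Ω → E} (he : MemLp e 2 μ) (hg : MemLp g 2 μ)
    (η : ℝ) :
    ∫ ω, ‖e ω - η • g ω‖ ^ 2 ∂μ =
      ∫ ω, ‖e ω‖ ^ 2 ∂μ - 2 * η * ∫ ω, ⟪e ω, g ω⟫ ∂μ + η ^ 2 * ∫ ω, ‖g ω‖ ^ 2 ∂μ := by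
  have hexpand : ∀ ω, ‖e ω - η • g ω‖ ^ 2 =
      ‖e ω‖ ^ 2 - 2 * η * ⟪e ω, g ω⟫ + η ^ 2 * ‖g ω‖ ^ 2 := fun ω ↦ by
    rw [norm_sub_sq_real, real_inner_smul_right, norm_smul, mul_pow, Real.norm_eq_abs, sq_abs]
    ring
  have he_sq := (memLp_two_iff_integrable_sq_norm he.1).1 he
  have hg_sq := (memLp_two_iff_integrable_sq_norm hg.1).1 hg
  have heg := (he.integrable_inner hg).const_mul (2 * η)
  have hfirst : Integrable (fun ω ↦ ‖e ω‖ ^ 2 - 2 * η * ⟪e ω, g ω⟫) μ := he_sq.sub heg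
  simp_rw [hexpand]
  rw [integral_add hfirst (hg_sq.const_mul _), integral_sub he_sq heg,
    integral_const_mul, integral_const_mul]

/-- Conditional unbiasedness turns the cross term `E⟪e, g⟫` into `E⟪e, A e⟫ ≥ τ E‖e‖²`. -/
theorem integral_norm_sub_smul_sq_le [CompleteSpace E] [IsFiniteMeasure μ] (hm : m ≤ mΩ)
    {A : E →L[ℝ] E} {τ : ℝ} (hA : ∀ x, τ * ‖x‖ ^ 2 ≤ ⟪x, A x⟫)
    {e g : Ω → E} (he_meas : StronglyMeasurable[m] e) (he : MemLp e 2 μ) (hg : MemLp g 2 μ)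
    (hunbiased : μ[g|m] =ᵐ[μ] fun ω ↦ A (e ω)) {η : ℝ} (hη : 0 ≤ η) :
    ∫ ω, ‖e ω - η • g ω‖ ^ 2 ∂μ ≤
      (1 - 2 * η * τ) * ∫ ω, ‖e ω‖ ^ 2 ∂μ + η ^ 2 * ∫ ω, ‖g ω‖ ^ 2 ∂μ := by
  have he_sq := (memLp_two_iff_integrable_sq_norm he.1).1 he
  have hAe : Integrable (fun ω ↦ ⟪e ω, A (e ω)⟫) μ := he.integrable_inner (A.comp_memLp' he)
  have hdescent : τ * ∫ ω, ‖e ω‖ ^ 2 ∂μ ≤ ∫ ω, ⟪e ω, g ω⟫ ∂μ :=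
    calc τ * ∫ ω, ‖e ω‖ ^ 2 ∂μ = ∫ ω, τ * ‖e ω‖ ^ 2 ∂μ := (integral_const_mul _ _).symm
      _ ≤ ∫ ω, ⟪e ω, A (e ω)⟫ ∂μ :=
        integral_mono (he_sq.const_mul τ) hAe fun ω ↦ hA (e ω)
      _ = ∫ ω, ⟪e ω, (μ[g|m]) ω⟫ ∂μ :=
        integral_congr_ae (by filter_upwards [hunbiased] with ω hω; rw [hω])
      _ = ∫ ω, ⟪e ω, g ω⟫ ∂μ := integral_inner_condExp_of_stronglyMeasurable_left hm he_meas
        (he.integrable_inner hg) (hg.integrable one_le_two)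
  rw [integral_norm_sub_smul_sq he hg]
  nlinarith [mul_le_mul_of_nonneg_left hdescent (by positivity : 0 ≤ 2 * η)]

end InnerProduct

theorem le_pow_mul_add_of_le_mul_add {R : Type*} [CommRing R] [PartialOrder R]
    [IsOrderedRing R] {a : ℕ → R} {ρ c : R} (hρ : 0 ≤ ρ)
    (h : ∀ t, a (t + 1) ≤ ρ * a t + (1 - ρ) * c) (t : ℕ) :
    a t ≤ ρ ^ t * a 0 + (1 - ρ ^ t) * c := by
  induction t with
  | zero => simp
  | succ t ih =>
    calc a (t + 1) ≤ ρ * a t + (1 - ρ) * c := h t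
      _ ≤ ρ * (ρ ^ t * a 0 + (1 - ρ ^ t) * c) + (1 - ρ) * c := by gcongr
      _ = ρ ^ (t + 1) * a 0 + (1 - ρ ^ (t + 1)) * c := by ring

theorem sgd_geometric_convergence_general {Ω : Type*} {mΩ : MeasurableSpace Ω}
    (μ : Measure Ω) [IsProbabilityMeasure μ]
    (𝒢 : Filtration ℕ mΩ) {n : ℕ}
    (G : Matrix (Fin n) (Fin n) ℝ) (τ : ℝ) (hτ : 0 < τ)
    (hlb : ∀ x : EuclideanSpace ℝ (Fin n),
      τ * ‖x‖ ^ 2 ≤ ⟪x, Matrix.toEuclideanLin G x⟫)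
    (b zstar : EuclideanSpace ℝ (Fin n))
    (hzstar : Matrix.toEuclideanLin G zstar = b)
    (σ : ℝ) (η : ℝ) (hη : 0 < η) (hη' : η ≤ 1 / (2 * τ))
    (Z g : ℕ → Ω → EuclideanSpace ℝ (Fin n))
    (hZmeas : ∀ t, StronglyMeasurable[𝒢 t] (Z t))
    (hZ : ∀ t, MemLp (Z t) 2 μ)
    (hg : ∀ t, MemLp (g t) 2 μ)
    (hgmoment : ∀ t, ∫ ω, ‖g t ω‖ ^ 2 ∂μ ≤ σ ^ 2)
    (hunbiased : ∀ t, μ[g t|𝒢 t] =ᵐ[μ] fun ω => Matrix.toEuclideanLin G (Z t ω) - b)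
    (hiter : ∀ t ω, Z (t + 1) ω = Z t ω - η • g t ω) :
    ∀ t, ∫ ω, ‖Z t ω - zstar‖ ^ 2 ∂μ ≤
      (1 - 2 * η * τ) ^ t * ∫ ω, ‖Z 0 ω - zstar‖ ^ 2 ∂μ +
        (1 - (1 - 2 * η * τ) ^ t) * (η * σ ^ 2) / (2 * τ) := by
  have hρ : 0 ≤ 1 - 2 * η * τ := by
    rw [le_div_iff₀ (by positivity)] at hη'
    linarith
  intro t
  rw [mul_div_assoc]
  refine le_pow_mul_add_of_le_mul_add (a := fun t ↦ ∫ ω, ‖Z t ω - zstar‖ ^ 2 ∂μ) hρ (fun t ↦ ?_) t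
  have hstep := integral_norm_sub_smul_sq_le (𝒢.le t)
    (A := (toEuclideanLin G).toContinuousLinearMap) (e := fun ω ↦ Z t ω - zstar) hlb
    ((hZmeas t).sub stronglyMeasurable_const) ((hZ t).sub (memLp_const zstar)) (hg t)
    ((hunbiased t).trans (by simp [← hzstar])) hη.le
  calc ∫ ω, ‖Z (t + 1) ω - zstar‖ ^ 2 ∂μ = ∫ ω, ‖(Z t ω - zstar) - η • g t ω‖ ^ 2 ∂μ := by
        simp_rw [hiter, sub_right_comm]
    _ ≤ (1 - 2 * η * τ) * ∫ ω, ‖Z t ω - zstar‖ ^ 2 ∂μ + η ^ 2 * ∫ ω, ‖g t ω‖ ^ 2 ∂μ := hstep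
    _ ≤ (1 - 2 * η * τ) * ∫ ω, ‖Z t ω - zstar‖ ^ 2 ∂μ + η ^ 2 * σ ^ 2 := by
        gcongr
        exact hgmoment t
    _ = (1 - 2 * η * τ) * ∫ ω, ‖Z t ω - zstar‖ ^ 2 ∂μ +
          (1 - (1 - 2 * η * τ)) * (η * σ ^ 2 / (2 * τ)) := by
        field_simp
        ring

/-- Static-target core of Theorem 1: the online SGD iteration
`Z_{t+1} = Z_t − η g_t` with conditionally unbiased stochastic gradients
(`E[g_t | 𝒢_t] = G Z_t − b` a.e.) of second moment at most `σ²`, for a symmetric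
matrix `G` with `x ⬝ (G x) ≥ τ ‖x‖²` (`τ > 0`), `G z⋆ = b`, and stepsize
`0 < η ≤ 1/(2τ)`, satisfies for every `t`
`E‖Z_t − z⋆‖² ≤ (1 − 2ητ)^t E‖Z_0 − z⋆‖² + (1 − (1 − 2ητ)^t) ησ²/(2τ)`. -/
theorem sgd_geometric_convergence {Ω : Type*} {mΩ : MeasurableSpace Ω}
    (μ : Measure Ω) [IsProbabilityMeasure μ]
    (𝒢 : Filtration ℕ mΩ) {n : ℕ}
    (G : Matrix (Fin n) (Fin n) ℝ) (hGsymm : G.IsSymm) (τ : ℝ) (hτ : 0 < τ)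
    (hlb : ∀ x : EuclideanSpace ℝ (Fin n),
      τ * ‖x‖ ^ 2 ≤ ⟪x, Matrix.toEuclideanLin G x⟫)
    (b zstar : EuclideanSpace ℝ (Fin n))
    (hzstar : Matrix.toEuclideanLin G zstar = b)
    (σ : ℝ) (hσ : 0 ≤ σ) (η : ℝ) (hη : 0 < η) (hη' : η ≤ 1 / (2 * τ))
    (Z g : ℕ → Ω → EuclideanSpace ℝ (Fin n))
    (hZmeas : ∀ t, StronglyMeasurable[𝒢 t] (Z t))
    (hZ : ∀ t, MemLp (Z t) 2 μ)
    (hg : ∀ t, MemLp (g t) 2 μ)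
    (hgmoment : ∀ t, ∫ ω, ‖g t ω‖ ^ 2 ∂μ ≤ σ ^ 2)
    (hunbiased : ∀ t, μ[g t|𝒢 t] =ᵐ[μ] fun ω => Matrix.toEuclideanLin G (Z t ω) - b)
    (hiter : ∀ t ω, Z (t + 1) ω = Z t ω - η • g t ω) :
    ∀ t, ∫ ω, ‖Z t ω - zstar‖ ^ 2 ∂μ ≤
      (1 - 2 * η * τ) ^ t * ∫ ω, ‖Z 0 ω - zstar‖ ^ 2 ∂μ +
        (1 - (1 - 2 * η * τ) ^ t) * (η * σ ^ 2) / (2 * τ) :=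
  sgd_geometric_convergence_general μ 𝒢 G τ hτ hlb b zstar hzstar σ η hη hη' Z g hZmeas hZ hg
    hgmoment hunbiased hiter
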